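/- Let g be a real 3×3 matrix with det g = 1, and let q, p : ℝ → ℝ³ be differentiable curves with p(t) · q(t) = 1 and p'(t) = q(t) × q'(t) for all t. Then the curves q̃(t) := g q(t) and p̃(t) := (gᵀ)⁻¹ p(t) also satisfy p̃(t) · q̃(t) = 1 and p̃'(t) = q̃(t) × q̃'(t) for all t. -/

import Mathlib

/-!
The pairing `p ⬝ᵥ q` is invariant under the contragredient action `(q, p) ↦ (g q, g⁻ᵀ p)`, and a
linear map moves cross products by its cofactor matrix, `(g u) × (g v) = (adj g)ᵀ (u × v)`, which
is `g⁻ᵀ` exactly when `det g = 1`. Since `g` is constant, differentiation commutes with it.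
-/

open Matrix

theorem crossProduct_mulVec_mulVec {R : Type*} [CommRing R] (A : Matrix (Fin 3) (Fin 3) R)
    (u v : Fin 3 → R) : (A *ᵥ u) ⨯₃ (A *ᵥ v) = (adjugate A)ᵀ *ᵥ (u ⨯₃ v) := by
  funext i
  fin_cases i <;>
    simp [cross_apply, mulVec, dotProduct, Fin.sum_univ_three, adjugate_fin_three] <;> ring

theorem transpose_inv_eq_transpose_adjugate_of_det_eq_one {n R : Type*} [Fintype n]
    [DecidableEq n] [CommRing R] {A : Matrix n n R} (hA : A.det = 1) :
    Aᵀ⁻¹ = (adjugate A)ᵀ := by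
  rw [← transpose_nonsing_inv, inv_def, hA, Ring.inverse_one, one_smul]

theorem transpose_inv_mulVec_dotProduct_mulVec {n R : Type*} [Fintype n] [DecidableEq n]
    [CommRing R] {A : Matrix n n R} (hA : IsUnit A.det) (p q : n → R) :
    (Aᵀ⁻¹ *ᵥ p) ⬝ᵥ (A *ᵥ q) = p ⬝ᵥ q := by
  rw [dotProduct_mulVec, ← transpose_nonsing_inv, ← vecMul_transpose, transpose_transpose,
    vecMul_vecMul, nonsing_inv_mul A hA, vecMul_one]

theorem HasDerivAt.const_mulVec {𝕜 m n : Type*} [NontriviallyNormedField 𝕜] [Fintype n]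
    (A : Matrix m n 𝕜) {p : 𝕜 → n → 𝕜} {p' : n → 𝕜} {t : 𝕜}
    (hp : HasDerivAt p p' t) : HasDerivAt (fun s => A *ᵥ p s) (A *ᵥ p') t :=
  hasDerivAt_pi.2 fun i => HasDerivAt.fun_sum fun j _ =>
    (hasDerivAt_pi.1 hp j).const_mul (A i j)

theorem SL3_symmetry_of_system (g : Matrix (Fin 3) (Fin 3) ℝ) (hg : g.det = 1)
    (q p : ℝ → Fin 3 → ℝ)
    (hq : Differentiable ℝ q) (hp : Differentiable ℝ p)
    (hpq : ∀ t, p t ⬝ᵥ q t = 1)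
    (hode : ∀ t, deriv p t = q t ⨯₃ deriv q t) :
    (∀ t, (g.transpose⁻¹ *ᵥ p t) ⬝ᵥ (g *ᵥ q t) = 1) ∧
    (∀ t, deriv (fun s => g.transpose⁻¹ *ᵥ p s) t
        = (g *ᵥ q t) ⨯₃ deriv (fun s => g *ᵥ q s) t) := by
  refine ⟨fun t => ?_, fun t => ?_⟩
  · rw [transpose_inv_mulVec_dotProduct_mulVec (hg ▸ isUnit_one), hpq t]
  · rw [((hp t).hasDerivAt.const_mulVec gᵀ⁻¹).deriv, ((hq t).hasDerivAt.const_mulVec g).deriv,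
      hode t, crossProduct_mulVec_mulVec, transpose_inv_eq_transpose_adjugate_of_det_eq_one hg]
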